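/- Let 𝔅_n^+ = {π ∈ 𝔅_n : π_n > 0}, 𝔅_n^− = {π ∈ 𝔅_n : π_n < 0}, and B_n^±(s,t,q) = Σ_{π∈𝔅_n^±} s^{edes_B(π)} t^{odes_B(π)} q^{inv_B(π)}. If n = 2k+1 then Σ_{π∈𝔅_n^−} s^{edes_B(π)} t^{odes_B(π)} q^{inv_B(π)} = Σ_{π∈𝔅_n^+} s^{k+1−edes_B(π)} t^{k−odes_B(π)} q^{n²−inv_B(π)}, i.e. B_n^−(s,t,q) = q^{n²} s^{k+1} t^k · B_n^+(s^{−1},t^{−1},q^{−1}). If n = 2k then Σ_{π∈𝔅_n^−} s^{edes_B(π)} t^{odes_B(π)} q^{inv_B(π)} = Σ_{π∈𝔅_n^+} s^{k−edes_B(π)} t^{k−odes_B(π)} q^{n²−inv_B(π)}, i.e. B_n^−(s,t,q) = q^{n²} s^k t^k · B_n^+(s^{−1},t^{−1},q^{−1}). Consequently B_n(s,t,q) = B_n^+(s,t,q) + q^{n²} s^{k+1} t^k B_n^+(s^{−1},t^{−1},q^{−1}) for n = 2k+1, and B_n(s,t,q) = B_n^+(s,t,q) + q^{n²} s^k t^k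 B_n^+(s^{−1},t^{−1},q^{−1}) for n = 2k. -/

import Mathlib

open Finset

/-- The hyperoctahedral group `𝔅_n`, encoded as (permutation of positions, signs):
the signed permutation sends `i+1` to `±(σ i + 1)`. -/
abbrev BG (n : ℕ) := Equiv.Perm (Fin n) × (Fin n → Bool)

/-- The value `π_i` (for `1 ≤ i ≤ n`) of the signed permutation, with `π_0 = 0`. -/
def bval {n : ℕ} (w : BG n) (i : ℕ) : ℤ :=
  if h : 1 ≤ i ∧ i ≤ n then
    (if w.2 ⟨i - 1, by omega⟩ then -1 else 1) * (((w.1 ⟨i - 1, by omega⟩ : Fin n) : ℕ) + 1 : ℤ)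
  else 0

/-- `edes_B`: even `i ∈ {0,…,n−1}` with `π_i > π_{i+1}`. -/
def edesB {n : ℕ} (w : BG n) : ℕ :=
  ((range n).filter fun i => Even i ∧ bval w (i + 1) < bval w i).card

/-- `odes_B`: odd `i ∈ {0,…,n−1}` with `π_i > π_{i+1}`. -/
def odesB {n : ℕ} (w : BG n) : ℕ :=
  ((range n).filter fun i => Odd i ∧ bval w (i + 1) < bval w i).card

/-- `easc_B`: even `i ∈ {0,…,n−1}` with `π_i < π_{i+1}`. -/
def eascB {n : ℕ} (w : BG n) : ℕ :=
  ((range n).filter fun i => Even i ∧ bval w i < bval w (i + 1)).card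

/-- `oasc_B`: odd `i ∈ {0,…,n−1}` with `π_i < π_{i+1}`. -/
def oascB {n : ℕ} (w : BG n) : ℕ :=
  ((range n).filter fun i => Odd i ∧ bval w i < bval w (i + 1)).card

/-- type B inversion number -/
def invB {n : ℕ} (w : BG n) : ℕ :=
  ((Icc 1 n ×ˢ Icc 1 n).filter fun p => p.1 < p.2 ∧ bval w p.2 < bval w p.1).card
  + ((Icc 1 n ×ˢ Icc 1 n).filter fun p => p.1 < p.2 ∧ bval w p.2 < -bval w p.1).card
  + ((Icc 1 n).filter fun i => bval w i < 0).card

/-- `B_n(s,t,q)` -/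
noncomputable def Bpoly {A : Type*} [CommRing A] (n : ℕ) (s t q : A) : A :=
  ∑ w : BG n, s ^ edesB w * t ^ odesB w * q ^ invB w

/-- `B_n(1,q)` -/
noncomputable def BOne {A : Type*} [CommRing A] (n : ℕ) (q : A) : A :=
  ∑ w : BG n, q ^ invB w

/-- `[k]_q` -/
def qInt {A : Type*} [CommRing A] (k : ℕ) (q : A) : A := ∑ i ∈ range k, q ^ i

/-- `[k]_q!` -/
def qFact {A : Type*} [CommRing A] (k : ℕ) (q : A) : A := ∏ i ∈ range k, qInt (i + 1) q

noncomputable section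

/-- the field `ℚ(q,s,t)` -/
abbrev K : Type := FractionRing (MvPolynomial (Fin 3) ℚ)

def qK : K := algebraMap (MvPolynomial (Fin 3) ℚ) K (MvPolynomial.X 0)
def sK : K := algebraMap (MvPolynomial (Fin 3) ℚ) K (MvPolynomial.X 1)
def tK : K := algebraMap (MvPolynomial (Fin 3) ℚ) K (MvPolynomial.X 2)

/-- the ring `R = ℚ(q,s,t)[M]/(M² − (1−s)(1−t))` -/
abbrev R : Type := AdjoinRoot ((Polynomial.X : Polynomial K) ^ 2
  - Polynomial.C ((1 - sK) * (1 - tK)))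

/-- the square root `M` of `(1−s)(1−t)` -/
def M : R := AdjoinRoot.root _

def ofK : K →+* R := algebraMap K R

/-- `𝔅_n^+` -/
def Bplus (n : ℕ) : Finset (BG n) := univ.filter fun w => 0 < bval w n

/-- `𝔅_n^−` -/
def Bminus (n : ℕ) : Finset (BG n) := univ.filter fun w => bval w n < 0

/-- `B_n^+(s,t,q)` -/
def BplusPoly (n : ℕ) (s t q : K) : K :=
  ∑ w ∈ Bplus n, s ^ edesB w * t ^ odesB w * q ^ invB w

/-- `B_n^−(s,t,q)` -/
def BminusPoly (n : ℕ) (s t q : K) : K :=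
  ∑ w ∈ Bminus n, s ^ edesB w * t ^ odesB w * q ^ invB w

/-! ### Auxiliary lemmas -/

/-- Negation of a signed permutation: flip all signs. -/
def negw {n : ℕ} (w : BG n) : BG n := (w.1, fun i => ! w.2 i)

lemma negw_negw {n : ℕ} (w : BG n) : negw (negw w) = w := by
  obtain ⟨a, b⟩ := w; simp [negw]

lemma bval_negw {n : ℕ} (w : BG n) (i : ℕ) : bval (negw w) i = - bval w i := by
  unfold bval
  by_cases h : 1 ≤ i ∧ i ≤ n
  · rw [dif_pos h, dif_pos h]
    cases hb : w.2 ⟨i - 1, by omega⟩ <;> simp [negw, hb]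
  · rw [dif_neg h, dif_neg h]; simp

lemma bval_natAbs {n : ℕ} (w : BG n) (i : ℕ) (h : 1 ≤ i ∧ i ≤ n) :
    (bval w i).natAbs = ((w.1 ⟨i - 1, by omega⟩ : Fin n) : ℕ) + 1 := by
  unfold bval
  rw [dif_pos h]
  cases hb : w.2 ⟨i - 1, by omega⟩ <;> simp [hb] <;> omega

lemma bval_ne_zero {n : ℕ} (w : BG n) (i : ℕ) (h : 1 ≤ i ∧ i ≤ n) :
    bval w i ≠ 0 := by
  intro h0
  have := bval_natAbs w i h
  rw [h0] at this
  simp at this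

lemma bval_natAbs_ne {n : ℕ} (w : BG n) {i j : ℕ} (hi : 1 ≤ i ∧ i ≤ n)
    (hj : 1 ≤ j ∧ j ≤ n) (hij : i ≠ j) :
    (bval w i).natAbs ≠ (bval w j).natAbs := by
  rw [bval_natAbs w i hi, bval_natAbs w j hj]
  intro h
  have h2 : w.1 ⟨i - 1, by omega⟩ = w.1 ⟨j - 1, by omega⟩ := by
    have : ((w.1 ⟨i - 1, by omega⟩ : Fin n) : ℕ) = ((w.1 ⟨j - 1, by omega⟩ : Fin n) : ℕ) := by omega
    exact Fin.val_injective this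
  have := w.1.injective h2
  rw [Fin.mk_eq_mk] at this
  omega

lemma bval_ne {n : ℕ} (w : BG n) {i j : ℕ} (hi : 1 ≤ i ∧ i ≤ n)
    (hj : 1 ≤ j ∧ j ≤ n) (hij : i ≠ j) : bval w i ≠ bval w j := by
  intro h
  exact bval_natAbs_ne w hi hj hij (by rw [h])

lemma bval_ne_neg {n : ℕ} (w : BG n) {i j : ℕ} (hi : 1 ≤ i ∧ i ≤ n)
    (hj : 1 ≤ j ∧ j ≤ n) (hij : i ≠ j) : bval w i ≠ -bval w j := by
  intro h
  exact bval_natAbs_ne w hi hj hij (by rw [h, Int.natAbs_neg])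

lemma bval_succ_ne {n : ℕ} (w : BG n) {i : ℕ} (h : i < n) :
    bval w i ≠ bval w (i + 1) := by
  rcases Nat.eq_zero_or_pos i with rfl | hp
  · have h0 : bval w 0 = 0 := by unfold bval; rw [dif_neg]; omega
    rw [h0]
    exact (bval_ne_zero w 1 ⟨le_refl 1, by omega⟩).symm
  · exact bval_ne w ⟨hp, by omega⟩ ⟨by omega, by omega⟩ (by omega)

lemma edesB_negw_eq_easc {n : ℕ} (w : BG n) : edesB (negw w) = eascB w := by
  unfold edesB eascB
  congr 1
  apply filter_congr
  intro i _
  rw [bval_negw, bval_negw]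
  constructor <;> rintro ⟨he, hlt⟩ <;> exact ⟨he, by omega⟩

lemma odesB_negw_eq_oasc {n : ℕ} (w : BG n) : odesB (negw w) = oascB w := by
  unfold odesB oascB
  congr 1
  apply filter_congr
  intro i _
  rw [bval_negw, bval_negw]
  constructor <;> rintro ⟨he, hlt⟩ <;> exact ⟨he, by omega⟩

lemma edesB_add_eascB {n : ℕ} (w : BG n) :
    edesB w + eascB w = ((range n).filter (fun i => Even i)).card := by
  unfold edesB eascB
  rw [show ((range n).filter fun i => Even i ∧ bval w (i+1) < bval w i)
      = ((range n).filter (fun i => Even i)).filter (fun i => bval w (i+1) < bval w i) by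
    rw [filter_filter]]
  rw [show ((range n).filter fun i => Even i ∧ bval w i < bval w (i+1))
      = ((range n).filter (fun i => Even i)).filter (fun i => ¬ (bval w (i+1) < bval w i)) by
    rw [filter_filter]
    apply filter_congr
    intro i hi
    rw [mem_range] at hi
    have := bval_succ_ne w hi
    constructor <;> rintro ⟨he, hlt⟩ <;> exact ⟨he, by omega⟩]
  exact card_filter_add_card_filter_not _

lemma odesB_add_oascB {n : ℕ} (w : BG n) :
    odesB w + oascB w = ((range n).filter (fun i => Odd i)).card := by
  unfold odesB oascB
  rw [show ((range n).filter fun i => Odd i ∧ bval w (i+1) < bval w i)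
      = ((range n).filter (fun i => Odd i)).filter (fun i => bval w (i+1) < bval w i) by
    rw [filter_filter]]
  rw [show ((range n).filter fun i => Odd i ∧ bval w i < bval w (i+1))
      = ((range n).filter (fun i => Odd i)).filter (fun i => ¬ (bval w (i+1) < bval w i)) by
    rw [filter_filter]
    apply filter_congr
    intro i hi
    rw [mem_range] at hi
    have := bval_succ_ne w hi
    constructor <;> rintro ⟨he, hlt⟩ <;> exact ⟨he, by omega⟩]
  exact card_filter_add_card_filter_not _

lemma even_card_range (n : ℕ) :
    ((range n).filter (fun i => Even i)).card = (n + 1) / 2 := by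
  induction n with
  | zero => simp
  | succ m ih =>
    rw [range_add_one, filter_insert]
    by_cases h : Even m
    · rw [if_pos h, card_insert_of_notMem (by simp)]
      rw [ih]
      obtain ⟨j, rfl⟩ := h
      omega
    · rw [if_neg h, ih]
      rw [Nat.not_even_iff_odd] at h
      obtain ⟨j, rfl⟩ := h
      omega

lemma odd_card_range (n : ℕ) :
    ((range n).filter (fun i => Odd i)).card = n / 2 := by
  induction n with
  | zero => simp
  | succ m ih =>
    rw [range_add_one, filter_insert]
    by_cases h : Odd m
    · rw [if_pos h, card_insert_of_notMem (by simp)]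
      rw [ih]
      obtain ⟨j, rfl⟩ := h
      omega
    · rw [if_neg h, ih]
      rw [Nat.not_odd_iff_even] at h
      obtain ⟨j, rfl⟩ := h
      omega

lemma edesB_le {n : ℕ} (w : BG n) : edesB w ≤ (n + 1) / 2 := by
  rw [← even_card_range n]
  apply card_le_card
  apply monotone_filter_right
  intro i _ hi
  exact hi.1

lemma odesB_le {n : ℕ} (w : BG n) : odesB w ≤ n / 2 := by
  rw [← odd_card_range n]
  apply card_le_card
  apply monotone_filter_right
  intro i _ hi
  exact hi.1

lemma pairs_card (n : ℕ) :
    2 * ((Icc 1 n ×ˢ Icc 1 n).filter fun p : ℕ × ℕ => p.1 < p.2).card + n = n ^ 2 := by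
  have h1 : ((Icc 1 n ×ˢ Icc 1 n).filter fun p : ℕ × ℕ => p.1 < p.2).card
      = ∑ a ∈ Icc 1 n, (n - a) := by
    rw [card_filter, sum_product]
    apply sum_congr rfl
    intro a _
    rw [← card_filter]
    have h2 : (Icc 1 n).filter (fun b => a < b) = Icc (a + 1) n := by
      ext b; simp only [mem_filter, mem_Icc]; omega
    rw [h2, Nat.card_Icc]
    omega
  have h3 : ∑ a ∈ range (n + 1), (n - a) = n + ∑ a ∈ Icc 1 n, (n - a) := by
    have : range (n + 1) = insert 0 (Icc 1 n) := by
      ext b; simp only [mem_range, mem_insert, mem_Icc]; omega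
    rw [this, sum_insert (by simp)]
    simp
  have h4 : ∑ a ∈ range (n + 1), (n - a) = ∑ a ∈ range (n + 1), a := by
    simpa using sum_range_reflect (fun j => j) (n + 1)
  have h5 := sum_range_id_mul_two (n + 1)
  simp only [Nat.add_sub_cancel] at h5
  have h6 : (n + 1) * n = n * n + n := by ring
  have h7 : n ^ 2 = n * n := sq n
  rw [h1]
  omega

lemma invB_add_negw {n : ℕ} (w : BG n) : invB w + invB (negw w) = n ^ 2 := by
  unfold invB
  set S : Finset (ℕ × ℕ) := Icc 1 n ×ˢ Icc 1 n with hS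
  set T : Finset (ℕ × ℕ) := S.filter (fun p => p.1 < p.2) with hT
  have hmem : ∀ p : ℕ × ℕ, p ∈ T → (1 ≤ p.1 ∧ p.1 ≤ n) ∧ (1 ≤ p.2 ∧ p.2 ≤ n) ∧ p.1 < p.2 := by
    intro p hp
    rw [hT, mem_filter, hS, mem_product, mem_Icc, mem_Icc] at hp
    tauto
  have hA : (S.filter fun p => p.1 < p.2 ∧ bval w p.2 < bval w p.1).card
      + (S.filter fun p => p.1 < p.2 ∧ bval (negw w) p.2 < bval (negw w) p.1).card
      = T.card := by
    rw [show (S.filter fun p => p.1 < p.2 ∧ bval w p.2 < bval w p.1)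
        = T.filter (fun p => bval w p.2 < bval w p.1) by rw [hT, filter_filter]]
    rw [show (S.filter fun p => p.1 < p.2 ∧ bval (negw w) p.2 < bval (negw w) p.1)
        = T.filter (fun p => ¬ (bval w p.2 < bval w p.1)) by
      rw [hT, filter_filter]
      apply filter_congr
      intro p hp
      rw [hS, mem_product, mem_Icc, mem_Icc] at hp
      simp only [bval_negw]
      by_cases hlt : p.1 < p.2
      · have hne : bval w p.1 ≠ bval w p.2 :=
          bval_ne w ⟨hp.1.1, hp.1.2⟩ ⟨hp.2.1, hp.2.2⟩ (Nat.ne_of_lt hlt)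
        constructor <;> rintro ⟨-, h⟩ <;> exact ⟨hlt, by omega⟩
      · constructor <;> rintro ⟨h, -⟩ <;> exact absurd h hlt]
    exact card_filter_add_card_filter_not _
  have hB : (S.filter fun p => p.1 < p.2 ∧ bval w p.2 < -bval w p.1).card
      + (S.filter fun p => p.1 < p.2 ∧ bval (negw w) p.2 < -bval (negw w) p.1).card
      = T.card := by
    rw [show (S.filter fun p => p.1 < p.2 ∧ bval w p.2 < -bval w p.1)
        = T.filter (fun p => bval w p.2 < -bval w p.1) by rw [hT, filter_filter]]
    rw [show (S.filter fun p => p.1 < p.2 ∧ bval (negw w) p.2 < -bval (negw w) p.1)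
        = T.filter (fun p => ¬ (bval w p.2 < -bval w p.1)) by
      rw [hT, filter_filter]
      apply filter_congr
      intro p hp
      rw [hS, mem_product, mem_Icc, mem_Icc] at hp
      simp only [bval_negw]
      by_cases hlt : p.1 < p.2
      · have hne : bval w p.1 ≠ -bval w p.2 :=
          bval_ne_neg w ⟨hp.1.1, hp.1.2⟩ ⟨hp.2.1, hp.2.2⟩ (Nat.ne_of_lt hlt)
        constructor <;> rintro ⟨-, h⟩ <;> exact ⟨hlt, by omega⟩
      · constructor <;> rintro ⟨h, -⟩ <;> exact absurd h hlt]
    exact card_filter_add_card_filter_not _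
  have hC : ((Icc 1 n).filter fun i => bval w i < 0).card
      + ((Icc 1 n).filter fun i => bval (negw w) i < 0).card = n := by
    rw [show ((Icc 1 n).filter fun i => bval (negw w) i < 0)
        = (Icc 1 n).filter (fun i => ¬ (bval w i < 0)) by
      apply filter_congr
      intro i hi
      rw [mem_Icc] at hi
      have hne := bval_ne_zero w i hi
      simp only [bval_negw]
      omega]
    rw [card_filter_add_card_filter_not, Nat.card_Icc]
    omega
  have hP := pairs_card n
  rw [← hT] at hP
  omega

lemma edesB_negw' {n : ℕ} (w : BG n) : edesB (negw w) = (n + 1) / 2 - edesB w := by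
  rw [edesB_negw_eq_easc]
  have h := edesB_add_eascB w
  rw [even_card_range] at h
  omega

lemma odesB_negw' {n : ℕ} (w : BG n) : odesB (negw w) = n / 2 - odesB w := by
  rw [odesB_negw_eq_oasc]
  have h := odesB_add_oascB w
  rw [odd_card_range] at h
  omega

lemma invB_negw' {n : ℕ} (w : BG n) : invB (negw w) = n ^ 2 - invB w := by
  have := invB_add_negw w
  omega

lemma invB_le {n : ℕ} (w : BG n) : invB w ≤ n ^ 2 := by
  have := invB_add_negw w
  omega

lemma qK_ne_zero : qK ≠ 0 := by
  unfold qK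
  rw [map_ne_zero_iff _ (IsFractionRing.injective (MvPolynomial (Fin 3) ℚ) K)]
  exact MvPolynomial.X_ne_zero 0

lemma sK_ne_zero : sK ≠ 0 := by
  unfold sK
  rw [map_ne_zero_iff _ (IsFractionRing.injective (MvPolynomial (Fin 3) ℚ) K)]
  exact MvPolynomial.X_ne_zero 1

lemma tK_ne_zero : tK ≠ 0 := by
  unfold tK
  rw [map_ne_zero_iff _ (IsFractionRing.injective (MvPolynomial (Fin 3) ℚ) K)]
  exact MvPolynomial.X_ne_zero 2

lemma pow_sub_helper {a : K} (ha : a ≠ 0) {e m : ℕ} (h : e ≤ m) :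
    a ^ (m - e) = a ^ m * (a⁻¹) ^ e := by
  rw [pow_sub₀ a ha h, inv_pow]

lemma negw_mem_Bplus {n : ℕ} (w : BG n) (hw : w ∈ Bminus n) : negw w ∈ Bplus n := by
  rw [Bminus, mem_filter] at hw
  rw [Bplus, mem_filter]
  refine ⟨mem_univ _, ?_⟩
  rw [bval_negw]
  omega

lemma negw_mem_Bminus {n : ℕ} (w : BG n) (hw : w ∈ Bplus n) : negw w ∈ Bminus n := by
  rw [Bplus, mem_filter] at hw
  rw [Bminus, mem_filter]
  refine ⟨mem_univ _, ?_⟩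
  rw [bval_negw]
  omega

lemma sum_bminus_eq (n : ℕ) :
    BminusPoly n sK tK qK =
      ∑ w ∈ Bplus n,
        sK ^ ((n + 1) / 2 - edesB w) * tK ^ (n / 2 - odesB w) * qK ^ (n ^ 2 - invB w) := by
  unfold BminusPoly
  refine sum_bij' (fun w _ => negw w) (fun w _ => negw w)
    (fun w hw => negw_mem_Bplus w hw) (fun w hw => negw_mem_Bminus w hw)
    (fun w _ => negw_negw w) (fun w _ => negw_negw w) ?_
  intro w _
  rw [edesB_negw', odesB_negw', invB_negw']
  have h1 := edesB_le w
  have h2 := odesB_le w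
  have h3 := invB_le (n := n) w
  congr 1
  · congr 1
    · congr 1
      omega
    · congr 1
      omega
  · congr 1
    omega

lemma mult_form (n : ℕ) :
    BminusPoly n sK tK qK =
      qK ^ (n ^ 2) * sK ^ ((n + 1) / 2) * tK ^ (n / 2) * BplusPoly n sK⁻¹ tK⁻¹ qK⁻¹ := by
  rw [sum_bminus_eq n]
  unfold BplusPoly
  rw [mul_sum]
  apply sum_congr rfl
  intro w hw
  rw [pow_sub_helper sK_ne_zero (edesB_le w), pow_sub_helper tK_ne_zero (odesB_le w),
    pow_sub_helper qK_ne_zero (invB_le w)]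
  ring

lemma bsplit (n : ℕ) (hn : 1 ≤ n) :
    Bpoly n sK tK qK = BplusPoly n sK tK qK + BminusPoly n sK tK qK := by
  unfold Bpoly BplusPoly BminusPoly Bplus Bminus
  rw [← sum_filter_add_sum_filter_not univ (fun w : BG n => 0 < bval w n)
    (fun w => sK ^ edesB w * tK ^ odesB w * qK ^ invB w)]
  congr 1
  apply sum_congr _ (fun _ _ => rfl)
  apply filter_congr
  intro w _
  have := bval_ne_zero w n ⟨hn, le_refl n⟩
  constructor <;> intro h <;> omega

theorem typeB_plus_minus_symmetry :
    -- odd case `n = 2k+1`, as an identity of sums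
    (∀ k : ℕ,
      BminusPoly (2 * k + 1) sK tK qK =
        ∑ w ∈ Bplus (2 * k + 1),
          sK ^ (k + 1 - edesB w) * tK ^ (k - odesB w) * qK ^ ((2 * k + 1) ^ 2 - invB w))
    ∧ -- odd case, multiplicative form
    (∀ k : ℕ,
      BminusPoly (2 * k + 1) sK tK qK =
        qK ^ ((2 * k + 1) ^ 2) * sK ^ (k + 1) * tK ^ k
          * BplusPoly (2 * k + 1) sK⁻¹ tK⁻¹ qK⁻¹)
    ∧ -- even case `n = 2k`, as an identity of sums
    (∀ k : ℕ, 0 < k →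
      BminusPoly (2 * k) sK tK qK =
        ∑ w ∈ Bplus (2 * k),
          sK ^ (k - edesB w) * tK ^ (k - odesB w) * qK ^ ((2 * k) ^ 2 - invB w))
    ∧ -- even case, multiplicative form
    (∀ k : ℕ, 0 < k →
      BminusPoly (2 * k) sK tK qK =
        qK ^ ((2 * k) ^ 2) * sK ^ k * tK ^ k * BplusPoly (2 * k) sK⁻¹ tK⁻¹ qK⁻¹)
    ∧ -- consequence, odd case
    (∀ k : ℕ,
      Bpoly (2 * k + 1) sK tK qK =
        BplusPoly (2 * k + 1) sK tK qK
          + qK ^ ((2 * k + 1) ^ 2) * sK ^ (k + 1) * tK ^ k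
            * BplusPoly (2 * k + 1) sK⁻¹ tK⁻¹ qK⁻¹)
    ∧ -- consequence, even case
    (∀ k : ℕ, 0 < k →
      Bpoly (2 * k) sK tK qK =
        BplusPoly (2 * k) sK tK qK
          + qK ^ ((2 * k) ^ 2) * sK ^ k * tK ^ k
            * BplusPoly (2 * k) sK⁻¹ tK⁻¹ qK⁻¹) := by
  refine ⟨?_, ?_, ?_, ?_, ?_, ?_⟩
  · intro k
    rw [sum_bminus_eq (2 * k + 1)]
    exact sum_congr rfl fun w _ => by
      rw [show (2 * k + 1 + 1) / 2 = k + 1 from by omega,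
        show (2 * k + 1) / 2 = k from by omega]
  · intro k
    rw [mult_form (2 * k + 1),
      show (2 * k + 1 + 1) / 2 = k + 1 from by omega,
      show (2 * k + 1) / 2 = k from by omega]
  · intro k hk
    rw [sum_bminus_eq (2 * k)]
    exact sum_congr rfl fun w _ => by
      rw [show (2 * k + 1) / 2 = k from by omega,
        show (2 * k) / 2 = k from by omega]
  · intro k hk
    rw [mult_form (2 * k),
      show (2 * k + 1) / 2 = k from by omega,
      show (2 * k) / 2 = k from by omega]
  · intro k
    rw [bsplit (2 * k + 1) (by omega), mult_form (2 * k + 1),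
      show (2 * k + 1 + 1) / 2 = k + 1 from by omega,
      show (2 * k + 1) / 2 = k from by omega]
  · intro k hk
    rw [bsplit (2 * k) (by omega), mult_form (2 * k),
      show (2 * k + 1) / 2 = k from by omega,
      show (2 * k) / 2 = k from by omega]


end
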